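/- Let X = (0,∞) with Lebesgue measure, 1 ≤ a < b < ∞, and let ψ : (a,b) → (0,∞) be continuous with inf_{p∈(a,b)} ψ(p) > 0, with lim_{p→a+} ψ(p) = ∞ or lim_{p→b−} ψ(p) = ∞, and such that there exists a measurable f₀ : (0,∞) → ℝ with |f₀|_p = ψ(p) for every p ∈ (a,b). For s > 0 let σ_s g (x) = g(x/s) and M(s) = sup { ‖σ_s g‖_{SL(ψ)} : g measurable, ‖g‖_{SL(ψ)} ≤ 1 }. Then lim_{s→0+} log M(s)/log s = 1 − 1/a and lim_{s→∞} log M(s)/log s = 1 − 1/b; i.e. the Boyd indices of the Bilateral Small Lebesgue space SL(ψ) are γ₁ = 1 − 1/a and γ₂ = 1 − 1/b. -/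

import Mathlib

/-!
Dilating a decomposition `g = ∑ gₖ` by `s` multiplies `|gₖ|_{q'}` by `s^{1/q'} = s^{1-1/q}`, so
`M(s) ≤ sup_{q ∈ (a,b)} s^{1-1/q}`, which is `s^{1-1/a}` for `s ≤ 1` and `s^{1-1/b}` for `s ≥ 1`.
Conversely, Hölder's inequality termwise gives `∫ |f₀ g| ≤ ‖g‖_{SL(ψ)}`, and testing this on a
suitably dilated and normalized Hölder extremal `|f₀|^{q-1}` of `f₀ ∈ L^q` gives
`M(s) ≥ s^{1-1/q}` for every `q ∈ (a,b)`. Letting `q → a` (resp. `q → b`) squeezes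
`log M(s) / log s`.
-/

open MeasureTheory Filter Set
open scoped ENNReal Topology

noncomputable section

/-- The `L_p` norm on `(0,∞)` with Lebesgue measure. -/
def lpNorm (f : ℝ → ℝ) (p : ℝ) : ℝ≥0∞ :=
  (∫⁻ x, ENNReal.ofReal (|f x| ^ p) ∂(volume.restrict (Set.Ioi (0 : ℝ)))) ^ (1 / p)

/-- The conjugate exponent `q' = q/(q-1)`. -/
def conjExp (q : ℝ) : ℝ := q / (q - 1)

/-- A decomposition `g = ∑ₖ gₖ` (a.e. on `(0,∞)`) with exponents `q k ∈ (a,b)`. -/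
structure SLDecomp (a b : ℝ) (g : ℝ → ℝ) where
  gk : ℕ → ℝ → ℝ
  q : ℕ → ℝ
  meas : ∀ k, Measurable (gk k)
  mem : ∀ k, q k ∈ Set.Ioo a b
  sum : ∀ᵐ x ∂(volume.restrict (Set.Ioi (0 : ℝ))), HasSum (fun k => gk k x) (g x)

/-- The cost `∑ₖ ψ(q(k)) |gₖ|_{q(k)'}` of a decomposition. -/
def SLDecomp.cost {a b : ℝ} {g : ℝ → ℝ} (d : SLDecomp a b g) (ψ : ℝ → ℝ) : ℝ≥0∞ :=
  ∑' k, ENNReal.ofReal (ψ (d.q k)) * lpNorm (d.gk k) (conjExp (d.q k))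

/-- The Bilateral Small Lebesgue norm on `(0,∞)`. -/
def smallNorm (ψ : ℝ → ℝ) (a b : ℝ) (g : ℝ → ℝ) : ℝ≥0∞ :=
  ⨅ d : SLDecomp a b g, d.cost ψ

/-- The operator norm of the dilation `σ_s g(x) = g(x/s)` acting on `SL(ψ)`. -/
def dilNorm (ψ : ℝ → ℝ) (a b : ℝ) (s : ℝ) : ℝ≥0∞ :=
  ⨆ (g : ℝ → ℝ) (_ : Measurable g ∧ smallNorm ψ a b g ≤ 1),
    smallNorm ψ a b (fun x => g (x / s))

local notation "μ₊" => (volume.restrict (Ioi (0 : ℝ)) : Measure ℝ)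

lemma holderConjugate_conjExp {q : ℝ} (hq : 1 < q) : q.HolderConjugate (conjExp q) :=
  .conjExponent hq

lemma lpNorm_eq_eLpNorm' (f : ℝ → ℝ) {p : ℝ} (hp : 0 ≤ p) : lpNorm f p = eLpNorm' f p μ₊ := by
  simp only [_root_.lpNorm, eLpNorm', Real.enorm_eq_ofReal_abs,
    ENNReal.ofReal_rpow_of_nonneg (abs_nonneg _) hp]

lemma lintegral_enorm_rpow_eq_lpNorm_rpow (f : ℝ → ℝ) {p : ℝ} (hp : 0 < p) :
    ∫⁻ x in Ioi 0, ‖f x‖ₑ ^ p = lpNorm f p ^ p := by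
  rw [lpNorm_eq_eLpNorm' f hp.le, lintegral_rpow_enorm_eq_rpow_eLpNorm' hp]

lemma map_div_restrict_Ioi {s : ℝ} (hs : 0 < s) :
    μ₊.map (· / s) = ENNReal.ofReal s • μ₊ := by
  have hpre : Ioi (0 : ℝ) = (· * s⁻¹) ⁻¹' Ioi 0 := by
    ext x; simp [mul_pos_iff_of_pos_right (inv_pos.2 hs)]
  simp_rw [div_eq_mul_inv]
  conv_lhs => rw [hpre]
  rw [← Measure.restrict_map (measurable_mul_const _) measurableSet_Ioi,
    Real.map_volume_mul_right (inv_ne_zero hs.ne'), Measure.restrict_smul, inv_inv,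
    abs_of_pos hs]

lemma lpNorm_comp_div {f : ℝ → ℝ} (hf : Measurable f) {s p : ℝ} (hs : 0 < s) (hp : 0 ≤ p) :
    lpNorm (fun x => f (x / s)) p = ENNReal.ofReal s ^ (1 / p) * lpNorm f p := by
  rw [lpNorm_eq_eLpNorm' _ hp, lpNorm_eq_eLpNorm' _ hp, ← eLpNorm'_smul_measure hp,
    ← map_div_restrict_Ioi hs, eLpNorm', eLpNorm',
    lintegral_map (hf.enorm.pow_const p) (measurable_div_const s)]

lemma ae_comp_div_restrict_Ioi {P : ℝ → Prop} (hP : ∀ᵐ x ∂μ₊, P x) {s : ℝ} (hs : 0 < s) :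
    ∀ᵐ x ∂μ₊, P (x / s) :=
  ae_of_ae_map (measurable_div_const s).aemeasurable <| by
    rw [map_div_restrict_Ioi hs]; exact Measure.ae_smul_measure hP _

lemma lintegral_mul_le_lpNorm_mul_lpNorm {p : ℝ} (hp : 1 < p) {f g : ℝ → ℝ}
    (hf : Measurable f) (hg : Measurable g) :
    ∫⁻ x in Ioi 0, ‖f x‖ₑ * ‖g x‖ₑ ≤ lpNorm f p * lpNorm g (conjExp p) := by
  have hpq := holderConjugate_conjExp hp
  rw [lpNorm_eq_eLpNorm' _ hpq.nonneg, lpNorm_eq_eLpNorm' _ hpq.symm.nonneg]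
  exact ENNReal.lintegral_mul_le_Lp_mul_Lq _ hpq hf.enorm.aemeasurable hg.enorm.aemeasurable

lemma lpNorm_abs_rpow (f : ℝ → ℝ) {r p : ℝ} (hr : 0 < r) (hp : 0 ≤ p) :
    lpNorm (fun x => |f x| ^ r) p = lpNorm f (p * r) ^ r := by
  rw [lpNorm_eq_eLpNorm' _ hp, lpNorm_eq_eLpNorm' _ (by positivity), ← eLpNorm'_norm_rpow _ _ _ hr]
  rfl

lemma lpNorm_const_mul (c : ℝ) (f : ℝ → ℝ) {p : ℝ} (hp : 0 < p) :
    lpNorm (fun x => c * f x) p = ‖c‖ₑ * lpNorm f p := by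
  rw [lpNorm_eq_eLpNorm' _ hp.le, lpNorm_eq_eLpNorm' _ hp.le, ← eLpNorm'_const_smul _ hp]
  rfl

section SmallNorm

variable {a b : ℝ} {ψ : ℝ → ℝ}

lemma lintegral_mul_le_smallNorm (ha : 1 ≤ a) {f₀ : ℝ → ℝ} (hf₀m : Measurable f₀)
    (hf₀ : ∀ p ∈ Ioo a b, lpNorm f₀ p = ENNReal.ofReal (ψ p)) (g : ℝ → ℝ) :
    ∫⁻ x in Ioi 0, ‖f₀ x‖ₑ * ‖g x‖ₑ ≤ smallNorm ψ a b g := by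
  refine le_iInf fun d => ?_
  calc ∫⁻ x in Ioi 0, ‖f₀ x‖ₑ * ‖g x‖ₑ
      ≤ ∫⁻ x in Ioi 0, ∑' k, ‖f₀ x‖ₑ * ‖d.gk k x‖ₑ := by
        refine lintegral_mono_ae (d.sum.mono fun x hx => ?_)
        rw [ENNReal.tsum_mul_left, ← hx.tsum_eq]
        gcongr
        exact enorm_tsum_le_tsum_enorm
    _ = ∑' k, ∫⁻ x in Ioi 0, ‖f₀ x‖ₑ * ‖d.gk k x‖ₑ :=
        lintegral_tsum fun k => (hf₀m.enorm.mul (d.meas k).enorm).aemeasurable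
    _ ≤ d.cost ψ := ENNReal.tsum_le_tsum fun k => by
        rw [← hf₀ _ (d.mem k)]
        exact lintegral_mul_le_lpNorm_mul_lpNorm (ha.trans_lt (d.mem k).1) hf₀m (d.meas k)

def SLDecomp.single {g : ℝ → ℝ} (hg : Measurable g) {q : ℝ} (hq : q ∈ Ioo a b) :
    SLDecomp a b g where
  gk k := if k = 0 then g else 0
  q _ := q
  meas k := by split_ifs <;> first | exact hg | exact measurable_zero
  mem _ := hq
  sum := .of_forall fun x => (hasSum_ite_eq 0 (g x)).congr_fun fun k => by split_ifs <;> rfl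

lemma smallNorm_le_mul_lpNorm {g : ℝ → ℝ} (hg : Measurable g) {q : ℝ} (hq : q ∈ Ioo a b)
    (hq1 : 1 < q) : smallNorm ψ a b g ≤ ENNReal.ofReal (ψ q) * lpNorm g (conjExp q) := by
  have hq' := (holderConjugate_conjExp hq1).symm
  refine (iInf_le _ (SLDecomp.single hg hq)).trans_eq ?_
  rw [SLDecomp.cost, tsum_eq_single 0 fun k hk => ?_]
  · rfl
  · simp only [SLDecomp.single, if_neg hk]
    rw [lpNorm_eq_eLpNorm' _ hq'.nonneg, eLpNorm'_zero hq'.pos, mul_zero]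

def SLDecomp.dilate {g : ℝ → ℝ} (d : SLDecomp a b g) {s : ℝ} (hs : 0 < s) :
    SLDecomp a b (fun x => g (x / s)) where
  gk k x := d.gk k (x / s)
  q := d.q
  meas k := (d.meas k).comp (measurable_div_const s)
  mem := d.mem
  sum := ae_comp_div_restrict_Ioi d.sum hs

lemma SLDecomp.cost_dilate_le (ha : 1 ≤ a) {g : ℝ → ℝ} (d : SLDecomp a b g) {s : ℝ}
    (hs : 0 < s) {K : ℝ≥0∞} (hK : ∀ q ∈ Ioo a b, ENNReal.ofReal s ^ (1 - q⁻¹) ≤ K) :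
    (d.dilate hs).cost ψ ≤ K * d.cost ψ := by
  rw [SLDecomp.cost, SLDecomp.cost, ← ENNReal.tsum_mul_left]
  refine ENNReal.tsum_le_tsum fun k => ?_
  have hpq := holderConjugate_conjExp (ha.trans_lt (d.mem k).1)
  simp only [SLDecomp.dilate]
  rw [lpNorm_comp_div (d.meas k) hs hpq.symm.nonneg, one_div, ← hpq.one_sub_inv, mul_left_comm]
  gcongr
  exact hK _ (d.mem k)

lemma smallNorm_comp_div_le (ha : 1 ≤ a) (g : ℝ → ℝ) {s : ℝ} (hs : 0 < s) {K : ℝ≥0∞}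
    (hK0 : K ≠ 0) (hKtop : K ≠ ⊤) (hK : ∀ q ∈ Ioo a b, ENNReal.ofReal s ^ (1 - q⁻¹) ≤ K) :
    smallNorm ψ a b (fun x => g (x / s)) ≤ K * smallNorm ψ a b g := by
  rw [smallNorm, smallNorm, ENNReal.mul_iInf_of_ne hK0 hKtop]
  exact le_iInf fun d => (iInf_le _ (d.dilate hs)).trans (d.cost_dilate_le ha hs hK)

lemma dilNorm_le (ha : 1 ≤ a) {s : ℝ} (hs : 0 < s) {K : ℝ≥0∞} (hK0 : K ≠ 0) (hKtop : K ≠ ⊤)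
    (hK : ∀ q ∈ Ioo a b, ENNReal.ofReal s ^ (1 - q⁻¹) ≤ K) : dilNorm ψ a b s ≤ K :=
  iSup₂_le fun g ⟨_, hg⟩ =>
    (smallNorm_comp_div_le ha g hs hK0 hKtop hK).trans (mul_le_of_le_one_right' hg)

lemma lintegral_mul_comp_div_le_dilNorm (ha : 1 ≤ a) {f₀ : ℝ → ℝ} (hf₀m : Measurable f₀)
    (hf₀ : ∀ p ∈ Ioo a b, lpNorm f₀ p = ENNReal.ofReal (ψ p)) {g : ℝ → ℝ} (hg : Measurable g)
    (hg1 : smallNorm ψ a b g ≤ 1) (s : ℝ) :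
    ∫⁻ x in Ioi 0, ‖f₀ x‖ₑ * ‖g (x / s)‖ₑ ≤ dilNorm ψ a b s :=
  (lintegral_mul_le_smallNorm ha hf₀m hf₀ _).trans <|
    le_iSup₂ (f := fun g (_ : Measurable g ∧ smallNorm ψ a b g ≤ 1) =>
      smallNorm ψ a b (fun x => g (x / s))) g ⟨hg, hg1⟩

lemma enorm_abs_rpow (x : ℝ) {r : ℝ} (hr : 0 ≤ r) : ‖|x| ^ r‖ₑ = ‖x‖ₑ ^ r := by
  rw [Real.enorm_of_nonneg (by positivity), Real.enorm_eq_ofReal_abs,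
    ENNReal.ofReal_rpow_of_nonneg (abs_nonneg x) hr]

/-- The witness is the Hölder extremal `|f₀|^{q-1}` of `f₀ ∈ L^q`, precomposed with `σ_{1/s}` so
that `σ_s` turns it back into the extremal, and scaled by `c` so that its small norm is `1`. -/
lemma ofReal_rpow_le_dilNorm (ha : 1 ≤ a) {f₀ : ℝ → ℝ} (hf₀m : Measurable f₀)
    (hf₀ : ∀ p ∈ Ioo a b, lpNorm f₀ p = ENNReal.ofReal (ψ p)) {q : ℝ} (hq : q ∈ Ioo a b)
    (hψq : 0 < ψ q) {s : ℝ} (hs : 0 < s) :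
    ENNReal.ofReal (s ^ (1 - q⁻¹)) ≤ dilNorm ψ a b s := by
  have hq1 : 1 < q := ha.trans_lt hq.1
  have hpq := holderConjugate_conjExp hq1
  set A := ψ q
  set c := s ^ (1 - q⁻¹) / A ^ q
  have hc : 0 ≤ c := by positivity
  set g : ℝ → ℝ := fun y => c * |f₀ (y / s⁻¹)| ^ (q - 1)
  have hgm : Measurable g := by fun_prop
  have hlpg : lpNorm g (conjExp q) =
      ENNReal.ofReal c * ENNReal.ofReal (s⁻¹ ^ (1 - q⁻¹)) * ENNReal.ofReal (A ^ (q - 1)) := by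
    rw [lpNorm_const_mul _ _ hpq.symm.pos, Real.enorm_of_nonneg hc,
      lpNorm_comp_div (f := fun x => |f₀ x| ^ (q - 1)) (by fun_prop) (inv_pos.2 hs)
        hpq.symm.nonneg, lpNorm_abs_rpow _ (by linarith) hpq.symm.nonneg,
      mul_comm _ (q - 1), hpq.sub_one_mul_conj, hf₀ q hq, one_div, ← hpq.one_sub_inv,
      ENNReal.ofReal_rpow_of_pos (inv_pos.2 hs), ENNReal.ofReal_rpow_of_pos hψq, mul_assoc]
  have hg1 : smallNorm ψ a b g ≤ 1 := by
    refine (smallNorm_le_mul_lpNorm hgm hq hq1).trans_eq ?_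
    rw [hlpg, ← ENNReal.ofReal_mul hc, ← ENNReal.ofReal_mul (by positivity),
      ← ENNReal.ofReal_mul hψq.le, ENNReal.ofReal_eq_one, Real.inv_rpow hs.le,
      Real.rpow_sub_one hψq.ne']
    simp only [c]
    field_simp
  have hpair : ∫⁻ x in Ioi 0, ‖f₀ x‖ₑ * ‖g (x / s)‖ₑ = ENNReal.ofReal (s ^ (1 - q⁻¹)) := by
    have hpt : ∀ x, ‖f₀ x‖ₑ * ‖g (x / s)‖ₑ = ‖c‖ₑ * ‖f₀ x‖ₑ ^ q := fun x => by
      rw [show g (x / s) = c * |f₀ x| ^ (q - 1) by simp only [g]; field_simp, enorm_mul,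
        enorm_abs_rpow _ (by linarith), mul_left_comm]
      conv_rhs => rw [show q = 1 + (q - 1) by ring,
        ENNReal.rpow_add_of_nonneg _ _ zero_le_one (by linarith), ENNReal.rpow_one]
    simp_rw [hpt]
    rw [lintegral_const_mul _ (by fun_prop), lintegral_enorm_rpow_eq_lpNorm_rpow _ (by linarith),
      hf₀ q hq, ENNReal.ofReal_rpow_of_pos hψq, Real.enorm_of_nonneg hc,
      ← ENNReal.ofReal_mul hc, div_mul_cancel₀ _ (by positivity)]
  exact hpair ▸ lintegral_mul_comp_div_le_dilNorm ha hf₀m hf₀ hgm hg1 s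

lemma dilNorm_le_ofReal_rpow (ha : 1 ≤ a) {s α : ℝ} (hs : 0 < s)
    (hα : ∀ q ∈ Ioo a b, s ^ (1 - q⁻¹) ≤ s ^ α) : dilNorm ψ a b s ≤ ENNReal.ofReal (s ^ α) := by
  refine dilNorm_le ha hs (ENNReal.ofReal_pos.2 (Real.rpow_pos_of_pos hs α)).ne'
    ENNReal.ofReal_ne_top fun q hq => ?_
  rw [ENNReal.ofReal_rpow_of_pos hs]
  exact ENNReal.ofReal_le_ofReal (hα q hq)

lemma toReal_dilNorm_mem_Icc (ha : 1 ≤ a) {f₀ : ℝ → ℝ} (hf₀m : Measurable f₀)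
    (hf₀ : ∀ p ∈ Ioo a b, lpNorm f₀ p = ENNReal.ofReal (ψ p)) (hψ : ∀ p ∈ Ioo a b, 0 < ψ p)
    {s α : ℝ} (hs : 0 < s) (hα : ∀ q ∈ Ioo a b, s ^ (1 - q⁻¹) ≤ s ^ α) {q : ℝ}
    (hq : q ∈ Ioo a b) : (dilNorm ψ a b s).toReal ∈ Icc (s ^ (1 - q⁻¹)) (s ^ α) := by
  have hup := dilNorm_le_ofReal_rpow (ψ := ψ) ha hs hα
  refine ⟨(ENNReal.ofReal_le_iff_le_toReal (ne_top_of_le_ne_top ENNReal.ofReal_ne_top hup)).1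
    (ofReal_rpow_le_dilNorm ha hf₀m hf₀ hq (hψ q hq) hs),
    ENNReal.toReal_le_of_le_ofReal (by positivity) hup⟩

end SmallNorm

section LogRatio

variable {s M α : ℝ}

open Real

lemma le_log_div_log_of_le_rpow (hs0 : 0 < s) (hs1 : s < 1) (hM : 0 < M) (h : M ≤ s ^ α) :
    α ≤ log M / log s :=
  (le_div_iff_of_neg (log_neg hs0 hs1)).2 <| by
    rw [← log_rpow hs0]; exact log_le_log hM h

lemma log_div_log_le_of_rpow_le (hs0 : 0 < s) (hs1 : s < 1) (h : s ^ α ≤ M) :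
    log M / log s ≤ α :=
  (div_le_iff_of_neg (log_neg hs0 hs1)).2 <| by
    rw [← log_rpow hs0]; exact log_le_log (rpow_pos_of_pos hs0 α) h

lemma log_div_log_le_of_le_rpow (hs1 : 1 < s) (hM : 0 < M) (h : M ≤ s ^ α) :
    log M / log s ≤ α :=
  (div_le_iff₀ (log_pos hs1)).2 <| by
    rw [← log_rpow (by linarith)]; exact log_le_log hM h

lemma le_log_div_log_of_rpow_le (hs1 : 1 < s) (h : s ^ α ≤ M) : α ≤ log M / log s :=
  (le_div_iff₀ (log_pos hs1)).2 <| by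
    rw [← log_rpow (by linarith)]; exact log_le_log (rpow_pos_of_pos (by linarith) α) h

variable {ι : Type*} {l : Filter ι} [l.NeBot] {M : ℝ → ℝ} {e : ι → ℝ}

lemma tendsto_log_div_log_nhdsGT_zero (he : Tendsto e l (𝓝 α))
    (hM : ∀ᶠ i in l, ∀ᶠ s in 𝓝[>] 0, M s ∈ Icc (s ^ e i) (s ^ α)) :
    Tendsto (fun s => log (M s) / log s) (𝓝[>] 0) (𝓝 α) := by
  have hs : ∀ᶠ s in 𝓝[>] (0 : ℝ), s ∈ Ioo 0 1 := Ioo_mem_nhdsGT one_pos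
  obtain ⟨i, hi⟩ := hM.exists
  refine tendsto_order.2 ⟨fun β hβ => ?_, fun β hβ => ?_⟩
  · filter_upwards [hs, hi] with s ⟨hs0, hs1⟩ ⟨hlow, hup⟩
    exact hβ.trans_le <|
      le_log_div_log_of_le_rpow hs0 hs1 ((rpow_pos_of_pos hs0 _).trans_le hlow) hup
  · obtain ⟨j, hj, hjβ⟩ := (hM.and (he.eventually (gt_mem_nhds hβ))).exists
    filter_upwards [hs, hj] with s ⟨hs0, hs1⟩ hjs
    exact (log_div_log_le_of_rpow_le hs0 hs1 hjs.1).trans_lt hjβ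

lemma tendsto_log_div_log_atTop (he : Tendsto e l (𝓝 α))
    (hM : ∀ᶠ i in l, ∀ᶠ s in atTop, M s ∈ Icc (s ^ e i) (s ^ α)) :
    Tendsto (fun s => log (M s) / log s) atTop (𝓝 α) := by
  have hs : ∀ᶠ s in atTop, (1 : ℝ) < s := eventually_gt_atTop 1
  obtain ⟨i, hi⟩ := hM.exists
  refine tendsto_order.2 ⟨fun β hβ => ?_, fun β hβ => ?_⟩
  · obtain ⟨j, hj, hjβ⟩ := (hM.and (he.eventually (lt_mem_nhds hβ))).exists
    filter_upwards [hs, hj] with s hs1 hjs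
    exact hjβ.trans_le (le_log_div_log_of_rpow_le hs1 hjs.1)
  · filter_upwards [hs, hi] with s hs1 ⟨hlow, hup⟩
    exact (log_div_log_le_of_le_rpow hs1
      ((rpow_pos_of_pos (by linarith) _).trans_le hlow) hup).trans_lt hβ

end LogRatio

theorem boyd_indices_small_general (a b : ℝ) (ha : 1 ≤ a) (hab : a < b)
    (ψ : ℝ → ℝ)
    (hψinf : ∃ c : ℝ, 0 < c ∧ ∀ p ∈ Set.Ioo a b, c ≤ ψ p)
    (f₀ : ℝ → ℝ) (hf₀m : Measurable f₀)
    (hf₀ : ∀ p ∈ Set.Ioo a b, lpNorm f₀ p = ENNReal.ofReal (ψ p)) :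
    Tendsto (fun s : ℝ => Real.log (dilNorm ψ a b s).toReal / Real.log s)
      (𝓝[>] 0) (𝓝 (1 - 1 / a)) ∧
    Tendsto (fun s : ℝ => Real.log (dilNorm ψ a b s).toReal / Real.log s)
      atTop (𝓝 (1 - 1 / b)) := by
  obtain ⟨c, hc, hcψ⟩ := hψinf
  have hψ : ∀ p ∈ Ioo a b, 0 < ψ p := fun p hp => hc.trans_le (hcψ p hp)
  have hM := fun {s α q} => toReal_dilNorm_mem_Icc ha hf₀m hf₀ hψ (s := s) (α := α) (q := q)
  have he : ∀ x : ℝ, 0 < x → ∀ t, Tendsto (fun q : ℝ => 1 - q⁻¹) (𝓝[t] x) (𝓝 (1 - x⁻¹)) :=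
    fun x hx _ => (tendsto_const_nhds.sub (tendsto_inv₀ hx.ne')).mono_left nhdsWithin_le_nhds
  simp only [one_div]
  constructor
  · refine tendsto_log_div_log_nhdsGT_zero (he a (by linarith) (Ioi a)) ?_
    filter_upwards [Ioo_mem_nhdsGT hab] with q hq
    filter_upwards [Ioo_mem_nhdsGT one_pos] with s ⟨hs0, hs1⟩
    exact hM hs0 (fun p hp => Real.rpow_le_rpow_of_exponent_ge hs0 hs1.le <|
      sub_le_sub_left (inv_anti₀ (by linarith) hp.1.le) 1) hq
  · refine tendsto_log_div_log_atTop (he b (by linarith) (Iio b)) ?_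
    filter_upwards [Ioo_mem_nhdsLT hab] with q hq
    filter_upwards [eventually_ge_atTop 1] with s hs1
    exact hM (by linarith) (fun p hp => Real.rpow_le_rpow_of_exponent_le hs1 <|
      sub_le_sub_left (inv_anti₀ (by linarith [hp.1]) hp.2.le) 1) hq

/-- The Boyd indices of the Bilateral Small Lebesgue space `SL(ψ)` on `(0,∞)` are
`γ₁ = 1 - 1/a` and `γ₂ = 1 - 1/b`. -/
theorem boyd_indices_small (a b : ℝ) (ha : 1 ≤ a) (hab : a < b)
    (ψ : ℝ → ℝ) (hψc : ContinuousOn ψ (Set.Ioo a b))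
    (hψinf : ∃ c : ℝ, 0 < c ∧ ∀ p ∈ Set.Ioo a b, c ≤ ψ p)
    (hψblow : Tendsto ψ (𝓝[>] a) atTop ∨ Tendsto ψ (𝓝[<] b) atTop)
    (f₀ : ℝ → ℝ) (hf₀m : Measurable f₀)
    (hf₀ : ∀ p ∈ Set.Ioo a b, lpNorm f₀ p = ENNReal.ofReal (ψ p)) :
    Tendsto (fun s : ℝ => Real.log (dilNorm ψ a b s).toReal / Real.log s)
      (𝓝[>] 0) (𝓝 (1 - 1 / a)) ∧
    Tendsto (fun s : ℝ => Real.log (dilNorm ψ a b s).toReal / Real.log s)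
      atTop (𝓝 (1 - 1 / b)) :=
  boyd_indices_small_general a b ha hab ψ hψinf f₀ hf₀m hf₀

end
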